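/- (Levenshtein bound for even strength) If t is even and there exists an orthogonal array OA(N,n,2,t), then N ≥ 2^n (1 - (n+1)/(2(t+2))). -/
import Mathlib


/-- Levenshtein bound for even strength: if t is even and there exists an
OA(N,n,2,t), then N ≥ 2^n (1 - (n+1)/(2(t+2))). -/
theorem stmt_5 (n t N : ℕ) (f : (Fin n → Fin 2) → ℕ)
    (ht : Even t) (htn : t ≤ n) (hN : 1 ≤ N)
    (htotal : ∑ x : Fin n → Fin 2, f x = N)
    (hOA : ∀ s : Finset (Fin n), s.card = t → ∀ g : Fin n → Fin 2,
      (∑ x ∈ Finset.univ.filter (fun x : Fin n → Fin 2 => ∀ i ∈ s, x i = g i), f x)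
        * 2 ^ t = N) :
    (N : ℝ) ≥ 2 ^ n * (1 - (n + 1) / (2 * (t + 2))) := by
  classical
  set sgn : Fin 2 → ℝ := fun b => (-1 : ℝ) ^ (b : ℕ) with hsgn
  set χ : Finset (Fin n) → (Fin n → Fin 2) → ℝ := fun T x => ∏ i ∈ T, sgn (x i) with hχ
  set fh : Finset (Fin n) → ℝ := fun T => ∑ x : Fin n → Fin 2, (f x : ℝ) * χ T x with hfh
  -- L1 : strength
  have L1 : ∀ T : Finset (Fin n), T.Nonempty → T.card ≤ t → fh T = 0 := by
    intro T hTne hTt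
    obtain ⟨S, hTS, hScard⟩ := Finset.exists_superset_card_eq hTt (by simpa using htn)
    obtain ⟨i0, hi0⟩ := hTne
    have hi0S : i0 ∈ S := hTS hi0
    set φ : (Fin n → Fin 2) → (Fin n → Fin 2) := fun x i => if i ∈ S then x i else 0 with hφ
    have hφidem : ∀ x, φ (φ x) = φ x := by
      intro x; funext i; simp only [hφ]; by_cases h : i ∈ S <;> simp [h]
    have key : fh T = ∑ g : Fin n → Fin 2,
        χ T g * ∑ x ∈ Finset.univ.filter (fun x => φ x = g), (f x : ℝ) := by
      rw [hfh]
      beta_reduce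
      rw [← Finset.sum_fiberwise Finset.univ φ (fun x => (f x : ℝ) * χ T x)]
      refine Finset.sum_congr rfl fun g _ => ?_
      rw [Finset.mul_sum]
      refine Finset.sum_congr rfl fun x hx => ?_
      have hxg : φ x = g := (Finset.mem_filter.mp hx).2
      have : χ T x = χ T g := by
        refine Finset.prod_congr rfl fun i hiT => ?_
        have hiS : i ∈ S := hTS hiT
        rw [← hxg]; simp [hφ, hiS]
      rw [this]; ring
    set c : (Fin n → Fin 2) → ℝ :=
      fun g => ∑ x ∈ Finset.univ.filter (fun x => φ x = g), (f x : ℝ) with hc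
    set flip : Fin 2 → Fin 2 := fun b => if b = 0 then 1 else 0 with hflip
    have hflipflip : ∀ b, flip (flip b) = b := by decide
    have hflipne : ∀ b, flip b ≠ b := by decide
    have hsgnflip : ∀ b, sgn (flip b) = - sgn b := by
      intro b; fin_cases b <;> simp [hflip, hsgn]
    set ι : (Fin n → Fin 2) → (Fin n → Fin 2) :=
      fun g => Function.update g i0 (flip (g i0)) with hι
    have hιι : ∀ g, ι (ι g) = g := by
      intro g; funext i
      by_cases h : i = i0
      · subst h; simp [hι, hflipflip]
      · simp [hι, Function.update_of_ne h]
    have hφι : ∀ g, φ (ι g) = ι (φ g) := by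
      intro g; funext i
      by_cases h : i = i0
      · subst h; simp [hι, hφ, hi0S]
      · by_cases h2 : i ∈ S <;> simp [hι, hφ, h, h2, Function.update_of_ne]
    have hχι : ∀ g, χ T (ι g) = - χ T g := by
      intro g
      have e1 : χ T (ι g) = sgn (ι g i0) * ∏ i ∈ T.erase i0, sgn (ι g i) :=
        (Finset.mul_prod_erase T _ hi0).symm
      have e2 : χ T g = sgn (g i0) * ∏ i ∈ T.erase i0, sgn (g i) :=
        (Finset.mul_prod_erase T _ hi0).symm
      have e3 : ∀ i ∈ T.erase i0, sgn (ι g i) = sgn (g i) := by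
        intro i hi
        have : i ≠ i0 := Finset.ne_of_mem_erase hi
        simp [hι, Function.update_of_ne this]
      rw [e1, e2, Finset.prod_congr rfl e3]
      have : sgn (ι g i0) = - sgn (g i0) := by simp [hι, hsgnflip]
      rw [this]; ring
    have hcfix : ∀ g, φ g = g → c g = (N : ℝ) / 2 ^ t := by
      intro g hg
      have hset : Finset.univ.filter (fun x => φ x = g)
          = Finset.univ.filter (fun x : Fin n → Fin 2 => ∀ i ∈ S, x i = g i) := by
        ext x
        simp only [Finset.mem_filter, Finset.mem_univ, true_and]
        constructor
        · intro h i hiS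
          rw [← h]; simp [hφ, hiS]
        · intro h
          funext i
          by_cases hiS : i ∈ S
          · simp [hφ, hiS, h i hiS]
          · have : g i = 0 := by rw [← congrFun hg i]; simp [hφ, hiS]
            simp [hφ, hiS, this]
      have := hOA S hScard g
      rw [hc]; beta_reduce
      rw [hset, eq_div_iff (by positivity : (2:ℝ)^t ≠ 0)]
      push_cast [← this]
      ring
    have hcnonfix : ∀ g, φ g ≠ g → c g = 0 := by
      intro g hg
      rw [hc]; beta_reduce
      refine Finset.sum_eq_zero fun x hx => ?_
      exfalso
      have hxg : φ x = g := (Finset.mem_filter.mp hx).2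
      exact hg (by rw [← hxg, hφidem])
    have hcι : ∀ g, c (ι g) = c g := by
      intro g
      by_cases hg : φ g = g
      · have : φ (ι g) = ι g := by rw [hφι, hg]
        rw [hcfix _ this, hcfix _ hg]
      · have : φ (ι g) ≠ ι g := by
          intro h
          apply hg
          have h2 := congrArg ι h
          rw [hφι, hιι, hιι] at h2
          exact h2
        rw [hcnonfix _ this, hcnonfix _ hg]
    rw [key]
    refine Finset.sum_ninvolution ι (fun g => ?_) (fun g _ => ?_) (fun g => Finset.mem_univ _)
      hιι
    · change χ T g * c g + χ T (ι g) * c (ι g) = 0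
      rw [hχι, hcι]; ring
    · intro h
      have := congrFun h i0
      simp only [hι, Function.update_self] at this
      exact hflipne _ this
  -- sign basics
  have hsq : ∀ b : Fin 2, sgn b * sgn b = 1 := by
    intro b; fin_cases b <;> norm_num [hsgn]
  have hdne : ∀ a b : Fin 2, a ≠ b → sgn a * sgn b = -1 := by
    intro a b h
    fin_cases a <;> fin_cases b <;> first | (exact absurd rfl h) | norm_num [hsgn]
  set d : (Fin n → Fin 2) → (Fin n → Fin 2) → Fin n → ℝ :=
    fun x y i => sgn (x i) * sgn (y i) with hd
  have hdcases : ∀ x y i, d x y i = 1 ∨ d x y i = -1 := by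
    intro x y i
    by_cases h : x i = y i
    · left; rw [hd]; beta_reduce; rw [h]; exact hsq _
    · right; exact hdne _ _ h
  have hfactor_nonneg : ∀ x y (s : Finset (Fin n)), 0 ≤ ∏ i ∈ s, (1 + d x y i) := by
    intro x y s
    refine Finset.prod_nonneg fun i _ => ?_
    rcases hdcases x y i with h | h <;> rw [h] <;> norm_num
  have hfactor_nonneg' : ∀ x y (s : Finset (Fin n)), 0 ≤ ∏ i ∈ s, (1 - d x y i) := by
    intro x y s
    refine Finset.prod_nonneg fun i _ => ?_
    rcases hdcases x y i with h | h <;> rw [h] <;> norm_num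
  -- powerset-sum / product identity
  have hpows : ∀ x y (s : Finset (Fin n)),
      ∏ j ∈ s, (1 + d x y j) = ∑ T ∈ s.powerset, ∏ j ∈ T, d x y j := by
    intro x y s
    calc ∏ j ∈ s, (1 + d x y j) = ∏ j ∈ s, (d x y j + 1) :=
          Finset.prod_congr rfl fun j _ => add_comm _ _
      _ = ∑ T ∈ s.powerset, (∏ j ∈ T, d x y j) * ∏ j ∈ s \ T, (1:ℝ) :=
          Finset.prod_add _ _ s
      _ = ∑ T ∈ s.powerset, ∏ j ∈ T, d x y j :=
          Finset.sum_congr rfl fun T _ => by rw [Finset.prod_const_one, mul_one]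
  -- plain kernel
  have hP : ∀ x y, ∑ T : Finset (Fin n), ∏ i ∈ T, d x y i = ∏ i, (1 + d x y i) := by
    intro x y
    rw [hpows x y Finset.univ, Finset.powerset_univ]
  have hPval : ∀ x y, ∏ i, (1 + d x y i) = if x = y then (2:ℝ)^n else 0 := by
    intro x y
    by_cases h : x = y
    · subst h
      simp only [if_pos rfl]
      have h2 : ∀ i : Fin n, (1 : ℝ) + d x x i = 2 := by
        intro i; rw [hd]; beta_reduce; rw [hsq]; norm_num
      rw [Finset.prod_congr rfl fun i _ => h2 i, Finset.prod_const]
      simp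
    · rw [if_neg h]
      have : ∃ i, x i ≠ y i := by
        by_contra hcon
        push_neg at hcon
        exact h (funext hcon)
      obtain ⟨i, hi⟩ := this
      refine Finset.prod_eq_zero (Finset.mem_univ i) ?_
      rw [hd]; beta_reduce; rw [hdne _ _ hi]; norm_num
  -- signed kernel
  have hSigned : ∀ x y, ∑ T : Finset (Fin n), (-1 : ℝ)^(T.card) * ∏ i ∈ T, d x y i
      = ∏ i, (1 - d x y i) := by
    intro x y
    rw [← Finset.powerset_univ,
      Finset.prod_sub (fun _ => (1:ℝ)) (d x y) Finset.univ]
    refine Finset.sum_congr rfl fun T hT => ?_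
    rw [Finset.prod_const_one, mul_one]
  -- weighted kernel
  have hQ : ∀ x y, ∑ T : Finset (Fin n), (T.card : ℝ) * ∏ i ∈ T, d x y i
      ≤ (n : ℝ)/2 * ∏ i, (1 + d x y i) := by
    intro x y
    have step1 : ∀ T : Finset (Fin n), (T.card : ℝ) * ∏ i ∈ T, d x y i
        = ∑ i, (if i ∈ T then ∏ j ∈ T, d x y j else 0) := by
      intro T
      rw [Finset.sum_ite_mem, Finset.univ_inter, Finset.sum_const, nsmul_eq_mul]
    calc ∑ T : Finset (Fin n), (T.card : ℝ) * ∏ i ∈ T, d x y i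
        = ∑ T : Finset (Fin n), ∑ i, (if i ∈ T then ∏ j ∈ T, d x y j else 0) :=
          Finset.sum_congr rfl fun T _ => step1 T
      _ = ∑ i, ∑ T : Finset (Fin n), (if i ∈ T then ∏ j ∈ T, d x y j else 0) :=
          Finset.sum_comm
      _ ≤ ∑ i : Fin n, 1/2 * ∏ j, (1 + d x y j) := by
          refine Finset.sum_le_sum fun i _ => ?_
          have hins : insert i (Finset.univ.erase i) = (Finset.univ : Finset (Fin n)) :=
            Finset.insert_erase (Finset.mem_univ i)
          have huniv : (Finset.univ : Finset (Finset (Fin n)))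
              = (insert i (Finset.univ.erase i)).powerset := by
            rw [hins, Finset.powerset_univ]
          have hsplit : ∑ T : Finset (Fin n), (if i ∈ T then ∏ j ∈ T, d x y j else 0)
              = d x y i * ∏ j ∈ Finset.univ.erase i, (1 + d x y j) := by
            rw [huniv, Finset.sum_powerset_insert (Finset.notMem_erase i _)]
            have h1 : ∑ T ∈ (Finset.univ.erase i).powerset,
                (if i ∈ T then ∏ j ∈ T, d x y j else 0) = 0 := by
              refine Finset.sum_eq_zero fun T hT => ?_
              have : i ∉ T := fun hiT =>
                Finset.notMem_erase i _ ((Finset.mem_powerset.mp hT) hiT)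
              simp [this]
            rw [h1, zero_add]
            have h2 : ∀ T ∈ (Finset.univ.erase i).powerset,
                (if i ∈ insert i T then ∏ j ∈ insert i T, d x y j else 0)
                = d x y i * ∏ j ∈ T, d x y j := by
              intro T hT
              have hiT : i ∉ T := fun hiT =>
                Finset.notMem_erase i _ ((Finset.mem_powerset.mp hT) hiT)
              rw [if_pos (Finset.mem_insert_self i T), Finset.prod_insert hiT]
            rw [Finset.sum_congr rfl h2, ← Finset.mul_sum, ← hpows x y (Finset.univ.erase i)]
          rw [hsplit]
          have hZ : 0 ≤ ∏ j ∈ Finset.univ.erase i, (1 + d x y j) :=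
            hfactor_nonneg x y _
          have hfull : (1 + d x y i) * ∏ j ∈ Finset.univ.erase i, (1 + d x y j)
              = ∏ j, (1 + d x y j) :=
            Finset.mul_prod_erase Finset.univ (fun j => 1 + d x y j) (Finset.mem_univ i)
          rcases hdcases x y i with hcase | hcase
          · rw [hcase, ← hfull, hcase]; ring_nf; exact le_refl _
          · rw [hcase, ← hfull, hcase]
            ring_nf
            nlinarith [hZ]
      _ = (n : ℝ)/2 * ∏ j, (1 + d x y j) := by
          rw [Finset.sum_const, Finset.card_univ, Fintype.card_fin, nsmul_eq_mul]
          ring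
  -- expansion
  have hχχ : ∀ T x y, χ T x * χ T y = ∏ i ∈ T, d x y i := by
    intro T x y
    rw [hχ]; beta_reduce
    rw [← Finset.prod_mul_distrib]
  have hExpand : ∀ wgt : Finset (Fin n) → ℝ,
      ∑ T : Finset (Fin n), wgt T * fh T ^ 2
      = ∑ x : Fin n → Fin 2, ∑ y : Fin n → Fin 2,
          (f x : ℝ) * (f y : ℝ) * ∑ T : Finset (Fin n), wgt T * ∏ i ∈ T, d x y i := by
    intro wgt
    calc ∑ T : Finset (Fin n), wgt T * fh T ^ 2
        = ∑ T : Finset (Fin n), ∑ x : Fin n → Fin 2, ∑ y : Fin n → Fin 2,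
            wgt T * ((f x : ℝ) * (f y : ℝ) * ∏ i ∈ T, d x y i) := by
          refine Finset.sum_congr rfl fun T _ => ?_
          rw [hfh]; beta_reduce
          rw [sq, Finset.sum_mul_sum, Finset.mul_sum]
          refine Finset.sum_congr rfl fun x _ => ?_
          rw [Finset.mul_sum]
          refine Finset.sum_congr rfl fun y _ => ?_
          rw [show ((f x : ℝ) * χ T x) * ((f y : ℝ) * χ T y)
              = (f x : ℝ) * (f y : ℝ) * (χ T x * χ T y) from by ring, hχχ]
      _ = ∑ x : Fin n → Fin 2, ∑ y : Fin n → Fin 2, ∑ T : Finset (Fin n),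
            wgt T * ((f x : ℝ) * (f y : ℝ) * ∏ i ∈ T, d x y i) := by
          rw [Finset.sum_comm]
          exact Finset.sum_congr rfl fun x _ => Finset.sum_comm
      _ = ∑ x : Fin n → Fin 2, ∑ y : Fin n → Fin 2,
            (f x : ℝ) * (f y : ℝ) * ∑ T : Finset (Fin n), wgt T * ∏ i ∈ T, d x y i := by
          refine Finset.sum_congr rfl fun x _ => Finset.sum_congr rfl fun y _ => ?_
          rw [Finset.mul_sum]
          exact Finset.sum_congr rfl fun T _ => by ring
  -- diagonal sums
  have hDiag : ∑ x : Fin n → Fin 2, ∑ y : Fin n → Fin 2,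
      (f x : ℝ) * (f y : ℝ) * ∏ i, (1 + d x y i)
      = 2 ^ n * ∑ x : Fin n → Fin 2, ((f x : ℝ)) ^ 2 := by
    calc ∑ x : Fin n → Fin 2, ∑ y : Fin n → Fin 2,
          (f x : ℝ) * (f y : ℝ) * ∏ i, (1 + d x y i)
        = ∑ x : Fin n → Fin 2, ∑ y : Fin n → Fin 2,
            (f x : ℝ) * (f y : ℝ) * (if x = y then (2:ℝ)^n else 0) := by
          exact Finset.sum_congr rfl fun x _ => Finset.sum_congr rfl fun y _ => by
            rw [hPval]
      _ = ∑ x : Fin n → Fin 2, ((f x : ℝ))^2 * 2^n := by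
          refine Finset.sum_congr rfl fun x _ => ?_
          simp only [mul_ite, mul_zero, Finset.sum_ite_eq, Finset.mem_univ, if_pos]
          ring
      _ = 2 ^ n * ∑ x : Fin n → Fin 2, ((f x : ℝ)) ^ 2 := by
          rw [← Finset.sum_mul]; ring
  have hPar : ∑ T : Finset (Fin n), fh T ^ 2
      = 2 ^ n * ∑ x : Fin n → Fin 2, ((f x : ℝ)) ^ 2 := by
    have h := hExpand (fun _ => 1)
    simp only [one_mul] at h
    rw [h, ← hDiag]
    exact Finset.sum_congr rfl fun x _ => Finset.sum_congr rfl fun y _ => by rw [hP]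
  -- weight function
  set wgt0 : Finset (Fin n) → ℝ :=
    fun T => (T.card : ℝ) + (1 - (-1:ℝ)^(T.card))/2 with hwgt0
  have hKer : ∀ x y, ∑ T : Finset (Fin n), wgt0 T * ∏ i ∈ T, d x y i
      ≤ ((n:ℝ)+1)/2 * ∏ i, (1 + d x y i) := by
    intro x y
    have e1 : ∑ T : Finset (Fin n), wgt0 T * ∏ i ∈ T, d x y i
        = (∑ T : Finset (Fin n), (T.card : ℝ) * ∏ i ∈ T, d x y i)
          + ((1:ℝ)/2) * (∑ T : Finset (Fin n), ∏ i ∈ T, d x y i)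
          - ((1:ℝ)/2) * (∑ T : Finset (Fin n), (-1:ℝ)^(T.card) * ∏ i ∈ T, d x y i) := by
      rw [Finset.mul_sum, Finset.mul_sum, ← Finset.sum_add_distrib, ← Finset.sum_sub_distrib]
      refine Finset.sum_congr rfl fun T _ => ?_
      rw [hwgt0]; beta_reduce; ring
    rw [e1, hP, hSigned]
    have h1 := hQ x y
    have h2 := hfactor_nonneg' x y Finset.univ
    linarith
  have hUpper : ∑ T : Finset (Fin n), wgt0 T * fh T ^ 2
      ≤ ((n:ℝ)+1)/2 * (2^n * ∑ x : Fin n → Fin 2, ((f x : ℝ))^2) := by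
    rw [hExpand wgt0]
    calc ∑ x : Fin n → Fin 2, ∑ y : Fin n → Fin 2,
          (f x : ℝ) * (f y : ℝ) * ∑ T : Finset (Fin n), wgt0 T * ∏ i ∈ T, d x y i
        ≤ ∑ x : Fin n → Fin 2, ∑ y : Fin n → Fin 2,
            (f x : ℝ) * (f y : ℝ) * (((n:ℝ)+1)/2 * ∏ i, (1 + d x y i)) := by
          refine Finset.sum_le_sum fun x _ => Finset.sum_le_sum fun y _ => ?_
          exact mul_le_mul_of_nonneg_left (hKer x y) (by positivity)
      _ = ((n:ℝ)+1)/2 * ∑ x : Fin n → Fin 2, ∑ y : Fin n → Fin 2,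
            (f x : ℝ) * (f y : ℝ) * ∏ i, (1 + d x y i) := by
          rw [Finset.mul_sum]
          refine Finset.sum_congr rfl fun x _ => ?_
          rw [Finset.mul_sum]
          exact Finset.sum_congr rfl fun y _ => by ring
      _ = ((n:ℝ)+1)/2 * (2^n * ∑ x : Fin n → Fin 2, ((f x : ℝ))^2) := by rw [hDiag]
  have hfhempty : fh ∅ = (N : ℝ) := by
    rw [hfh]; beta_reduce
    rw [hχ]; beta_reduce
    simp only [Finset.prod_empty, mul_one]
    exact_mod_cast htotal
  have hLower : ((t:ℝ)+2) * (2^n * (∑ x : Fin n → Fin 2, ((f x : ℝ))^2) - (N:ℝ)^2)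
      ≤ ∑ T : Finset (Fin n), wgt0 T * fh T ^ 2 := by
    have hw0 : wgt0 ∅ = 0 := by rw [hwgt0]; beta_reduce; simp
    have hsplit1 : ∑ T : Finset (Fin n), fh T ^ 2
        = fh ∅ ^ 2 + ∑ T ∈ Finset.univ.erase ∅, fh T ^ 2 :=
      (Finset.add_sum_erase _ _ (Finset.mem_univ ∅)).symm
    have hsplit2 : ∑ T : Finset (Fin n), wgt0 T * fh T ^ 2
        = ∑ T ∈ Finset.univ.erase ∅, wgt0 T * fh T ^ 2 := by
      rw [← Finset.add_sum_erase _ _ (Finset.mem_univ (∅ : Finset (Fin n))), hw0, zero_mul,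
        zero_add]
    have hperT : ∀ T ∈ Finset.univ.erase (∅ : Finset (Fin n)),
        ((t:ℝ)+2) * fh T ^ 2 ≤ wgt0 T * fh T ^ 2 := by
      intro T hT
      have hTne : T ≠ ∅ := Finset.ne_of_mem_erase hT
      rcases eq_or_ne (fh T) 0 with h0 | h0
      · rw [h0]; simp
      · have hcard : t + 1 ≤ T.card := by
          by_contra hlt
          push_neg at hlt
          exact h0 (L1 T (Finset.nonempty_of_ne_empty hTne) (by omega))
        have hw : ((t:ℝ)+2) ≤ wgt0 T := by
          rw [hwgt0]; beta_reduce
          rcases Nat.even_or_odd T.card with he | ho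
          · have hne : T.card ≠ t + 1 := by
              intro hcon
              rw [hcon] at he
              obtain ⟨k, hk⟩ := ht
              obtain ⟨m, hm⟩ := he
              omega
            have hge : t + 2 ≤ T.card := by omega
            rw [Even.neg_one_pow he]
            have : ((t:ℝ)+2) ≤ (T.card : ℝ) := by exact_mod_cast hge
            linarith
          · rw [Odd.neg_one_pow ho]
            have : ((t:ℝ)+1) ≤ (T.card : ℝ) := by exact_mod_cast hcard
            linarith
        exact mul_le_mul_of_nonneg_right hw (sq_nonneg _)
    calc ((t:ℝ)+2) * (2^n * (∑ x : Fin n → Fin 2, ((f x : ℝ))^2) - (N:ℝ)^2)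
        = ((t:ℝ)+2) * ∑ T ∈ Finset.univ.erase ∅, fh T ^ 2 := by
          rw [← hPar, hsplit1, hfhempty]; ring
      _ = ∑ T ∈ Finset.univ.erase ∅, ((t:ℝ)+2) * fh T ^ 2 := Finset.mul_sum _ _ _
      _ ≤ ∑ T ∈ Finset.univ.erase ∅, wgt0 T * fh T ^ 2 := Finset.sum_le_sum hperT
      _ = ∑ T : Finset (Fin n), wgt0 T * fh T ^ 2 := hsplit2.symm
  have hMaster : ((t:ℝ)+2) * (2^n * (∑ x : Fin n → Fin 2, ((f x : ℝ))^2) - (N:ℝ)^2)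
      ≤ ((n:ℝ)+1)/2 * (2^n * ∑ x : Fin n → Fin 2, ((f x : ℝ))^2) :=
    hLower.trans hUpper
  -- W ≥ N
  have hWN : (N:ℝ) ≤ ∑ x : Fin n → Fin 2, ((f x : ℝ))^2 := by
    have h1 : (N:ℝ) = ∑ x : Fin n → Fin 2, ((f x : ℝ)) := by
      rw [← htotal]; push_cast; rfl
    rw [h1]
    refine Finset.sum_le_sum fun x _ => ?_
    have : f x ≤ f x ^ 2 := Nat.le_self_pow two_ne_zero _
    exact_mod_cast this
  have hNpos : (0:ℝ) < N := by exact_mod_cast hN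
  have h2n : (0:ℝ) < 2^n := by positivity
  have ht2 : (0:ℝ) < 2*((t:ℝ)+2) := by positivity
  set W := ∑ x : Fin n → Fin 2, ((f x : ℝ))^2 with hWdef
  have hWpos : (0:ℝ) < W := lt_of_lt_of_le hNpos hWN
  have goal2 : 2^n * (2*((t:ℝ)+2) - ((n:ℝ)+1)) ≤ (N:ℝ) * (2*((t:ℝ)+2)) := by
    rcases le_or_gt (2*((t:ℝ)+2)) ((n:ℝ)+1) with hc | hc
    · nlinarith [h2n, hNpos, ht2]
    · have h1 : 2^n * (N:ℝ) * (2*((t:ℝ)+2) - ((n:ℝ)+1)) ≤ 2^n * W * (2*((t:ℝ)+2) - ((n:ℝ)+1)) :=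
        mul_le_mul_of_nonneg_right (mul_le_mul_of_nonneg_left hWN h2n.le) (by linarith)
      have h2 : 2^n * W * (2*((t:ℝ)+2) - ((n:ℝ)+1)) ≤ 2*((t:ℝ)+2) * (N:ℝ)^2 := by
        linarith [hMaster]
      have h4 : (2^n * (2*((t:ℝ)+2) - ((n:ℝ)+1))) * (N:ℝ) ≤ ((N:ℝ) * (2*((t:ℝ)+2))) * (N:ℝ) := by
        nlinarith [h1.trans h2]
      exact le_of_mul_le_mul_right h4 hNpos
  rw [ge_iff_le]
  calc (2:ℝ)^n * (1 - ((n:ℝ) + 1) / (2 * ((t:ℝ) + 2)))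
      = (2^n * (2*((t:ℝ)+2) - ((n:ℝ)+1))) / (2*((t:ℝ)+2)) := by
        field_simp
    _ ≤ (N:ℝ) := by
        rw [div_le_iff₀ ht2]
        exact goal2
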